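/- arXiv:2004.06051 — 2 statements merged into one kernel-verified Lean document; each statement's English description precedes it below -/
import Mathlib

section
/- Let g : ℝ → ℝ be twice differentiable and suppose that g''(v) + π² * g(v) = 2*π*sin(π*v) for all v ∈ [0,1], that g(0) = 1 and g(1) = 0, and that ∫_0^1 g(v)*sin(π*v) dv = 0. Then g(v) = (1−v)*cos(π*v) − (1/(2π))*sin(π*v) for all v ∈ [0,1]. -/
/-!
The difference `h = g - f₁` solves `h'' + π² h = 0` on `[0, 1]` with `h 0 = 0`, so
`h = c sin(π v)` there. Both `g` and `f₁` are orthogonal to `sin(π v)`, hence so is `h`, and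
`0 = ∫₀¹ h sin(π v) = c / 2` gives `c = 0`.
-/

open Real MeasureTheory

theorem hasDerivAt_sin_const_mul (ω x : ℝ) :
    HasDerivAt (fun x => sin (ω * x)) (ω * cos (ω * x)) x := by
  simpa [mul_comm] using ((hasDerivAt_id x).const_mul ω).sin

theorem hasDerivAt_cos_const_mul (ω x : ℝ) :
    HasDerivAt (fun x => cos (ω * x)) (-(ω * sin (ω * x))) x := by
  simpa [mul_comm] using ((hasDerivAt_id x).const_mul ω).cos

theorem eq_cos_add_sin_of_harmonic {ω b : ℝ} (hω : ω ≠ 0) {h h' : ℝ → ℝ}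
    (hh : ∀ x ∈ Set.Icc 0 b, HasDerivAt h (h' x) x)
    (hh' : ∀ x ∈ Set.Icc 0 b, HasDerivAt h' (-(ω ^ 2 * h x)) x) :
    ∀ x ∈ Set.Icc 0 b, h x = h 0 * cos (ω * x) + h' 0 / ω * sin (ω * x) := by
  have const_of_deriv_zero (W : ℝ → ℝ) (hW : ∀ x ∈ Set.Icc 0 b, HasDerivAt W 0 x) :
      ∀ x ∈ Set.Icc 0 b, W x = W 0 :=
    constant_of_has_deriv_right_zero
      (fun x hx => (hW x hx).continuousAt.continuousWithinAt)
      (fun x hx => (hW x (Set.Ico_subset_Icc_self hx)).hasDerivWithinAt)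
  -- Up to sign, the Wronskians of `h` with the solutions `sin (ω x)` and `cos (ω x)`.
  have hW₁ := const_of_deriv_zero (fun x => h' x * sin (ω * x) - ω * (h x * cos (ω * x)))
    fun x hx => by
      refine (((hh' x hx).mul (hasDerivAt_sin_const_mul ω x)).sub
        (((hh x hx).mul (hasDerivAt_cos_const_mul ω x)).const_mul ω)).congr_deriv ?_
      ring
  have hW₂ := const_of_deriv_zero (fun x => h' x * cos (ω * x) + ω * (h x * sin (ω * x)))
    fun x hx => by
      refine (((hh' x hx).mul (hasDerivAt_cos_const_mul ω x)).add
        (((hh x hx).mul (hasDerivAt_sin_const_mul ω x)).const_mul ω)).congr_deriv ?_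
      ring
  intro x hx
  have e₁ := hW₁ x hx
  have e₂ := hW₂ x hx
  simp only [mul_zero, cos_zero, sin_zero, mul_one] at e₁ e₂
  field_simp
  linear_combination sin (ω * x) * e₂ - cos (ω * x) * e₁ - ω * h x * sin_sq_add_cos_sq (ω * x)

theorem integral_sin_pi_mul_sq : ∫ v in (0 : ℝ)..1, sin (π * v) ^ 2 = 1 / 2 := by
  rw [intervalIntegral.integral_comp_mul_left (fun x => sin x ^ 2) pi_ne_zero, integral_sin_sq]
  simp only [mul_zero, sin_zero, cos_zero, mul_one, sin_pi, cos_pi, mul_neg, neg_zero, sub_self,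
    zero_add, sub_zero, smul_eq_mul, one_div]
  field_simp

noncomputable def f₁ (v : ℝ) : ℝ := (1 - v) * cos (π * v) - 1 / (2 * π) * sin (π * v)

noncomputable def f₁' (v : ℝ) : ℝ := -(3 / 2) * cos (π * v) - π * (1 - v) * sin (π * v)

theorem hasDerivAt_f₁ (v : ℝ) : HasDerivAt f₁ (f₁' v) v := by
  refine ((((hasDerivAt_id v).const_sub 1).mul (hasDerivAt_cos_const_mul π v)).sub
    ((hasDerivAt_sin_const_mul π v).const_mul (1 / (2 * π)))).congr_deriv ?_
  simp only [f₁', id_eq]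
  field_simp
  ring

theorem hasDerivAt_f₁' (v : ℝ) : HasDerivAt f₁' (2 * π * sin (π * v) - π ^ 2 * f₁ v) v := by
  refine (((hasDerivAt_cos_const_mul π v).const_mul (-(3 / 2))).sub
    ((((hasDerivAt_id v).const_sub 1).const_mul π).mul
      (hasDerivAt_sin_const_mul π v))).congr_deriv ?_
  simp only [f₁, id_eq]
  field_simp
  ring

theorem continuous_f₁ : Continuous f₁ :=
  continuous_iff_continuousAt.2 fun v => (hasDerivAt_f₁ v).continuousAt

theorem integral_f₁_mul_sin_pi_mul : ∫ v in (0 : ℝ)..1, f₁ v * sin (π * v) = 0 := by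
  have hF (v : ℝ) : HasDerivAt (fun x => (2 * (1 - x) * sin (π * x) ^ 2 - 1) / (4 * π))
      (f₁ v * sin (π * v)) v := by
    refine (((((hasDerivAt_id v).const_sub 1).const_mul 2).mul
      ((hasDerivAt_sin_const_mul π v).pow 2)).sub_const 1).div_const (4 * π) |>.congr_deriv ?_
    simp only [f₁, id_eq, Pi.pow_apply]
    field_simp
    ring
  rw [intervalIntegral.integral_eq_sub_of_hasDerivAt (fun v _ => hF v)
    ((continuous_f₁.mul (by fun_prop)).intervalIntegrable 0 1)]
  simp

theorem eq_f₁_of_ode_boundary_orth_general (g : ℝ → ℝ)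
    (hg : Differentiable ℝ g) (hg' : Differentiable ℝ (deriv g))
    (hode : ∀ v ∈ Set.Icc (0:ℝ) 1,
      deriv (deriv g) v + π ^ 2 * g v = 2 * π * Real.sin (π * v))
    (h0 : g 0 = 1)
    (horth : ∫ v in (0:ℝ)..1, g v * Real.sin (π * v) = 0) :
    ∀ v ∈ Set.Icc (0:ℝ) 1,
      g v = (1 - v) * Real.cos (π * v) - (1 / (2 * π)) * Real.sin (π * v) := by
  set c := (deriv g 0 - f₁' 0) / π
  have hsol : ∀ x ∈ Set.Icc (0 : ℝ) 1, g x - f₁ x = c * sin (π * x) := by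
    intro x hx
    have := eq_cos_add_sin_of_harmonic (h := g - f₁) (h' := deriv g - f₁') pi_ne_zero
      (fun x _ => (hg x).hasDerivAt.sub (hasDerivAt_f₁ x))
      (fun x hx => ((hg' x).hasDerivAt.sub (hasDerivAt_f₁' x)).congr_deriv
        (by simp only [Pi.sub_apply]; linarith [hode x hx])) x hx
    simpa [h0, f₁] using this
  have hc : c / 2 = 0 := calc
    c / 2 = ∫ v in (0 : ℝ)..1, c * sin (π * v) ^ 2 := by
      rw [intervalIntegral.integral_const_mul, integral_sin_pi_mul_sq]; ring
    _ = ∫ v in (0 : ℝ)..1, g v * sin (π * v) - f₁ v * sin (π * v) := by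
      refine intervalIntegral.integral_congr fun v hv => ?_
      rw [Set.uIcc_of_le zero_le_one] at hv
      simp only [← sub_mul, hsol v hv]; ring
    _ = 0 := by
      have hgc := hg.continuous
      have hf₁c := continuous_f₁
      rw [intervalIntegral.integral_sub (Continuous.intervalIntegrable (by fun_prop) _ _)
        (Continuous.intervalIntegrable (by fun_prop) _ _), horth,
        integral_f₁_mul_sin_pi_mul, sub_zero]
  intro v hv
  exact sub_eq_zero.1 ((hsol v hv).trans (by rw [show c = 0 by linarith, zero_mul]))

/-- Uniqueness: a twice differentiable function `g` with `g'' + π² g = 2π sin(πv)` on `[0,1]`,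
`g(0) = 1`, `g(1) = 0` and `∫_0^1 g(v) sin(πv) dv = 0` must equal
`f₁(v) = (1−v)·cos(πv) − (1/(2π))·sin(πv)` on `[0,1]`. -/
theorem eq_f₁_of_ode_boundary_orth (g : ℝ → ℝ)
    (hg : Differentiable ℝ g) (hg' : Differentiable ℝ (deriv g))
    (hode : ∀ v ∈ Set.Icc (0:ℝ) 1,
      deriv (deriv g) v + π ^ 2 * g v = 2 * π * Real.sin (π * v))
    (h0 : g 0 = 1) (h1 : g 1 = 0)
    (horth : ∫ v in (0:ℝ)..1, g v * Real.sin (π * v) = 0) :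
    ∀ v ∈ Set.Icc (0:ℝ) 1,
      g v = (1 - v) * Real.cos (π * v) - (1 / (2 * π)) * Real.sin (π * v) :=
  eq_f₁_of_ode_boundary_orth_general g hg hg' hode h0 horth
end

section
/- Let r ∈ (0,1), ε > 0, t > 0, σ ∈ ℝ, and let θ be a twice continuously differentiable real-valued function on an open neighborhood of Ω̃ = {(x,v) ∈ ℝ² : 0 ≤ v ≤ 1, −r^(2v)/2 ≤ x ≤ r^(2v)/2}. Suppose that (i) r^(2v)*θ_xx + ε²*( (3/4)*θ + 2*θ_v/ln(1/r) + θ_vv/(ln(1/r))² ) = 0 at every point of Ω̃, and (ii) for every v ∈ [0,1] and each sign ±: ±θ_x(±r^(2v)/2, v) + ε²*( θ(±r^(2v)/2, v)/2 + θ_v(±r^(2v)/2, v)/ln(1/r) ) = ε² * √(1 + ε²*r^(2v)) * (σ/t) * θ(±r^(2v)/2, v). Define m(v) = r^(−2v) * ∫_{−r^(2v)/2}^{r^(2v)/2} θ_v(x,v) dx and m̄(v) = r^(−2v) * ∫_{−r^(2v)/2}^{r^(2v)/2} θ(x,v) dx. Then for every v ∈ (0,1): −m'(v) = (ln r)² *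 ( ( θ(r^(2v)/2, v) + θ(−r^(2v)/2, v) ) * ( (σ/t)*√(1 + ε²*r^(2v)) − 1/2 ) + (3/4)*m̄(v) ). -/
/-!
Substituting `x = r^(2v) y` turns `m(v)` into `∫_{-1/2}^{1/2} θ_v(r^(2v) y, v) dy`, which may be
differentiated under the integral sign; scaling back gives
`m'(v) = r^(-2v) ∫ (2 ln r · x θ_vx + θ_vv) dx`. Eliminating `θ_vv` by the interior equation, the
integrand becomes the `x`-derivative of the flux `2 ln r · x θ_v - (ln r)² r^(2v) θ_x / ε²` minus
`(3/4)(ln r)² θ`, and the Steklov conditions evaluate the flux at the two ends of the segment.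
-/

open Real MeasureTheory Set Metric Function Topology

section Partial

variable {E : Type*} [NormedAddCommGroup E] [NormedSpace ℝ E]

noncomputable def partialFst (f : ℝ × ℝ → E) (p : ℝ × ℝ) : E := fderiv ℝ f p (1, 0)

noncomputable def partialSnd (f : ℝ × ℝ → E) (p : ℝ × ℝ) : E := fderiv ℝ f p (0, 1)

variable {f : ℝ × ℝ → E} {U : Set (ℝ × ℝ)} {x v : ℝ}

theorem DifferentiableAt.hasDerivAt_partialFst (h : DifferentiableAt ℝ f (x, v)) :
    HasDerivAt (fun s => f (s, v)) (partialFst f (x, v)) x :=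
  h.hasFDerivAt.comp_hasDerivAt x ((hasDerivAt_id x).prodMk (hasDerivAt_const x v))

theorem DifferentiableAt.hasDerivAt_partialSnd (h : DifferentiableAt ℝ f (x, v)) :
    HasDerivAt (fun w => f (x, w)) (partialSnd f (x, v)) v :=
  h.hasFDerivAt.comp_hasDerivAt v ((hasDerivAt_const v x).prodMk (hasDerivAt_id v))

theorem ContDiffOn.partialFst_of_isOpen {m n : WithTop ℕ∞} (hf : ContDiffOn ℝ n f U) (hU : IsOpen U)
    (hmn : m + 1 ≤ n) : ContDiffOn ℝ m (partialFst f) U :=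
  (hf.fderiv_of_isOpen hU hmn).clm_apply contDiffOn_const

theorem ContDiffOn.partialSnd_of_isOpen {m n : WithTop ℕ∞} (hf : ContDiffOn ℝ n f U) (hU : IsOpen U)
    (hmn : m + 1 ≤ n) : ContDiffOn ℝ m (partialSnd f) U :=
  (hf.fderiv_of_isOpen hU hmn).clm_apply contDiffOn_const

theorem ContDiffOn.hasDerivAt_partialFst {n : WithTop ℕ∞} (hf : ContDiffOn ℝ n f U)
    (hU : IsOpen U) (hn : n ≠ 0) (hp : (x, v) ∈ U) :
    HasDerivAt (fun s => f (s, v)) (partialFst f (x, v)) x :=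
  ((hf.differentiableOn hn).differentiableAt (hU.mem_nhds hp)).hasDerivAt_partialFst

theorem ContDiffOn.hasDerivAt_partialSnd {n : WithTop ℕ∞} (hf : ContDiffOn ℝ n f U)
    (hU : IsOpen U) (hn : n ≠ 0) (hp : (x, v) ∈ U) :
    HasDerivAt (fun w => f (x, w)) (partialSnd f (x, v)) v :=
  ((hf.differentiableOn hn).differentiableAt (hU.mem_nhds hp)).hasDerivAt_partialSnd

theorem deriv_deriv_fst_eq_partialFst_partialFst (hf : ContDiffOn ℝ 2 f U) (hU : IsOpen U)
    (hp : (x, v) ∈ U) : deriv (deriv fun s => f (s, v)) x = partialFst (partialFst f) (x, v) := by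
  have hline : ∀ᶠ s in 𝓝 x, (s, v) ∈ U :=
    (continuous_id.prodMk continuous_const).continuousAt.preimage_mem_nhds (hU.mem_nhds hp)
  rw [Filter.EventuallyEq.deriv_eq
    (hline.mono fun s hs => (hf.hasDerivAt_partialFst hU two_ne_zero hs).deriv)]
  exact ((hf.partialFst_of_isOpen hU le_rfl).hasDerivAt_partialFst hU one_ne_zero hp).deriv

theorem deriv_deriv_snd_eq_partialSnd_partialSnd (hf : ContDiffOn ℝ 2 f U) (hU : IsOpen U)
    (hp : (x, v) ∈ U) : deriv (deriv fun w => f (x, w)) v = partialSnd (partialSnd f) (x, v) := by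
  have hline : ∀ᶠ w in 𝓝 v, (x, w) ∈ U :=
    (continuous_const.prodMk continuous_id).continuousAt.preimage_mem_nhds (hU.mem_nhds hp)
  rw [Filter.EventuallyEq.deriv_eq
    (hline.mono fun w hw => (hf.hasDerivAt_partialSnd hU two_ne_zero hw).deriv)]
  exact ((hf.partialSnd_of_isOpen hU le_rfl).hasDerivAt_partialSnd hU one_ne_zero hp).deriv

end Partial

theorem hasDerivAt_intervalIntegral_of_continuousOn {E : Type*} [NormedAddCommGroup E]
    [NormedSpace ℝ E] [CompleteSpace E] {F F' : ℝ → ℝ → E} {v₀ δ a b : ℝ} (hδ : 0 < δ)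
    (hF : ContinuousOn (uncurry F) (closedBall v₀ δ ×ˢ uIcc a b))
    (hF' : ContinuousOn (uncurry F') (closedBall v₀ δ ×ˢ uIcc a b))
    (hderiv : ∀ v ∈ ball v₀ δ, ∀ y ∈ uIcc a b, HasDerivAt (F · y) (F' v y) v) :
    HasDerivAt (fun v => ∫ y in a..b, F v y) (∫ y in a..b, F' v₀ y) v₀ := by
  have hslice : ∀ {G : ℝ → ℝ → E}, ContinuousOn (uncurry G) (closedBall v₀ δ ×ˢ uIcc a b) →
      ∀ v ∈ closedBall v₀ δ, ContinuousOn (G v) (uIcc a b) := fun hG v hv =>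
    hG.comp (continuous_const.prodMk continuous_id).continuousOn fun _ hy => ⟨hv, hy⟩
  have hv₀ : v₀ ∈ closedBall v₀ δ := mem_closedBall_self hδ.le
  obtain ⟨C, hC⟩ :=
    (isCompact_closedBall v₀ δ).prod isCompact_uIcc |>.exists_bound_of_continuousOn hF'
  refine (intervalIntegral.hasDerivAt_integral_of_dominated_loc_of_deriv_le (bound := fun _ => C)
    (ball_mem_nhds v₀ hδ) ?_ (hslice hF v₀ hv₀).intervalIntegrable
    ((hslice hF' v₀ hv₀).mono uIoc_subset_uIcc |>.aestronglyMeasurable measurableSet_uIoc)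
    (ae_of_all _ fun y hy v hv => hC (v, y) ⟨ball_subset_closedBall hv, uIoc_subset_uIcc hy⟩)
    intervalIntegrable_const
    (ae_of_all _ fun y hy v hv => hderiv v hv y (uIoc_subset_uIcc hy))).2
  filter_upwards [closedBall_mem_nhds v₀ hδ] with v hv
  exact (hslice hF v hv).mono uIoc_subset_uIcc |>.aestronglyMeasurable measurableSet_uIoc

theorem hasDerivAt_integral_comp_mul_left {g : ℝ × ℝ → ℝ} {U : Set (ℝ × ℝ)} (hU : IsOpen U)
    (hg : ContDiffOn ℝ 1 g U) {c c' : ℝ → ℝ} (hc : ∀ v, HasDerivAt c (c' v) v)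
    (hc' : Continuous c') {v₀ δ a b : ℝ} (hδ : 0 < δ)
    (hmem : ∀ v ∈ closedBall v₀ δ, ∀ y ∈ uIcc a b, (c v * y, v) ∈ U) :
    HasDerivAt (fun v => ∫ y in a..b, g (c v * y, v))
      (∫ y in a..b, (c' v₀ * y * partialFst g (c v₀ * y, v₀) + partialSnd g (c v₀ * y, v₀)))
      v₀ := by
  have hcont : Continuous c := continuous_iff_continuousAt.2 fun v => (hc v).continuousAt
  have hmap : Continuous fun q : ℝ × ℝ => (c q.1 * q.2, q.1) := by fun_prop
  have hmaps : MapsTo (fun q : ℝ × ℝ => (c q.1 * q.2, q.1)) (closedBall v₀ δ ×ˢ uIcc a b) U :=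
    fun q hq => hmem q.1 hq.1 q.2 hq.2
  refine hasDerivAt_intervalIntegral_of_continuousOn (F := fun v y => g (c v * y, v))
    (F' := fun v y => c' v * y * partialFst g (c v * y, v) + partialSnd g (c v * y, v)) hδ
    (hg.continuousOn.comp hmap.continuousOn hmaps) ?_ fun v hv y hy => ?_
  · have hfst := (hg.partialFst_of_isOpen (m := 0) hU (by norm_num)).continuousOn.comp
      hmap.continuousOn hmaps
    have hsnd := (hg.partialSnd_of_isOpen (m := 0) hU (by norm_num)).continuousOn.comp
      hmap.continuousOn hmaps
    exact ((hc'.comp continuous_fst).mul continuous_snd).continuousOn.mul hfst |>.add hsnd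
  · have hp := hmem v (ball_subset_closedBall hv) y hy
    have hgd := (hg.differentiableOn one_ne_zero).differentiableAt (hU.mem_nhds hp)
    have hcurve : HasDerivAt (fun w => (c w * y, w)) (c' v * y, 1) v :=
      ((hc v).mul_const y).prodMk (hasDerivAt_id v)
    have hdir : ((c' v * y, 1) : ℝ × ℝ) = (c' v * y) • ((1 : ℝ), (0 : ℝ)) + ((0 : ℝ), (1 : ℝ)) := by
      simp
    have hcomp := hgd.hasFDerivAt.comp_hasDerivAt (f := fun w => (c w * y, w)) v hcurve
    rwa [hdir, map_add, map_smul, smul_eq_mul] at hcomp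

theorem inv_mul_integral_symm_eq_integral_comp_mul {c : ℝ} (hc : c ≠ 0) (h : ℝ → ℝ) :
    c⁻¹ * ∫ x in -c / 2..c / 2, h x = ∫ y in -1 / 2..1 / 2, h (c * y) := by
  rw [intervalIntegral.integral_comp_mul_left h hc, smul_eq_mul]
  congr 2 <;> ring

def cuspDomain (r : ℝ) : Set (ℝ × ℝ) :=
  {p | p.2 ∈ Icc 0 1 ∧ p.1 ∈ Icc (-(r ^ (2 * p.2)) / 2) (r ^ (2 * p.2) / 2)}

theorem mem_cuspDomain_of_mem_uIcc {r v x : ℝ} (hr : 0 ≤ r) (hv : v ∈ Icc 0 1)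
    (hx : x ∈ uIcc (-(r ^ (2 * v)) / 2) (r ^ (2 * v) / 2)) : (x, v) ∈ cuspDomain r := by
  have hc := rpow_nonneg hr (2 * v)
  rw [uIcc_of_le (by linarith)] at hx
  exact ⟨hv, hx⟩

theorem hasDerivAt_rpow_two_mul {r : ℝ} (hr : 0 < r) (v : ℝ) :
    HasDerivAt (fun w => r ^ (2 * w)) (2 * log r * r ^ (2 * v)) v := by
  convert ((hasDerivAt_id' v).const_mul 2).const_rpow hr using 1
  ring

theorem hasDerivAt_cuspMean {r : ℝ} (hr : 0 < r) {g : ℝ × ℝ → ℝ} {U : Set (ℝ × ℝ)}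
    (hU : IsOpen U) (hΩU : cuspDomain r ⊆ U) (hg : ContDiffOn ℝ 1 g U) {v₀ : ℝ}
    (hv₀ : v₀ ∈ Ioo 0 1) :
    HasDerivAt (fun v => r ^ (-(2 * v)) * ∫ x in -(r ^ (2 * v)) / 2..r ^ (2 * v) / 2, g (x, v))
      (r ^ (-(2 * v₀)) * ∫ x in -(r ^ (2 * v₀)) / 2..r ^ (2 * v₀) / 2,
        (2 * log r * x * partialFst g (x, v₀) + partialSnd g (x, v₀))) v₀ := by
  have hc : ∀ v : ℝ, r ^ (2 * v) ≠ 0 := fun v => (rpow_pos_of_pos hr _).ne'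
  simp only [rpow_neg hr.le, inv_mul_integral_symm_eq_integral_comp_mul (hc _)]
  have hδ : 0 < min v₀ (1 - v₀) := lt_min hv₀.1 (by linarith [hv₀.2])
  convert hasDerivAt_integral_comp_mul_left hU hg (hasDerivAt_rpow_two_mul hr)
    (continuous_const.mul
      (continuous_const.rpow (continuous_const.mul continuous_id) fun _ => Or.inl hr.ne')) hδ ?_
    using 3 with y
  · ring
  · intro v hv y hy
    rw [mem_closedBall, Real.dist_eq, abs_le] at hv
    rw [uIcc_of_le (by norm_num)] at hy
    have hcv := rpow_pos_of_pos hr (2 * v)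
    refine hΩU ⟨⟨?_, ?_⟩, ?_, ?_⟩
    · linarith [min_le_left v₀ (1 - v₀)]
    · linarith [min_le_right v₀ (1 - v₀)]
    · nlinarith [hy.1]
    · nlinarith [hy.2]

theorem hasDerivAt_cuspMean_deriv_snd {r : ℝ} (hr : 0 < r) {f : ℝ × ℝ → ℝ} {U : Set (ℝ × ℝ)}
    (hU : IsOpen U) (hΩU : cuspDomain r ⊆ U) (hf : ContDiffOn ℝ 2 f U) {v₀ : ℝ}
    (hv₀ : v₀ ∈ Ioo 0 1) :
    HasDerivAt (fun v => r ^ (-(2 * v)) *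
        ∫ x in -(r ^ (2 * v)) / 2..r ^ (2 * v) / 2, deriv (fun w => f (x, w)) v)
      (r ^ (-(2 * v₀)) * ∫ x in -(r ^ (2 * v₀)) / 2..r ^ (2 * v₀) / 2,
        (2 * log r * x * partialFst (partialSnd f) (x, v₀) + partialSnd (partialSnd f) (x, v₀)))
      v₀ := by
  refine (hasDerivAt_cuspMean hr hU hΩU (hf.partialSnd_of_isOpen hU le_rfl) hv₀)
    |>.congr_of_eventuallyEq ?_
  filter_upwards [Ioo_mem_nhds hv₀.1 hv₀.2] with w hw
  refine congrArg _ (intervalIntegral.integral_congr fun x hx => ?_)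
  exact (hf.hasDerivAt_partialSnd hU two_ne_zero
    (hΩU (mem_cuspDomain_of_mem_uIcc hr.le (Ioo_subset_Icc_self hw) hx))).deriv

theorem integral_eq_flux_sub_of_interior_eq {f : ℝ × ℝ → ℝ} {U : Set (ℝ × ℝ)} (hU : IsOpen U)
    (hf : ContDiffOn ℝ 2 f U) {r ε a l u v : ℝ} (hr : log r ≠ 0) (hε : ε ≠ 0) (hlu : l ≤ u)
    (hseg : ∀ x ∈ Icc l u, (x, v) ∈ U)
    (hint : ∀ x ∈ Icc l u, a * deriv (deriv fun s => f (s, v)) x +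
      ε ^ 2 * ((3 / 4) * f (x, v) + 2 * deriv (fun w => f (x, w)) v / log (1 / r) +
        deriv (deriv fun w => f (x, w)) v / log (1 / r) ^ 2) = 0) :
    ∫ x in l..u, (2 * log r * x * partialFst (partialSnd f) (x, v) +
        partialSnd (partialSnd f) (x, v)) =
      2 * log r * (u * partialSnd f (u, v)) - log r ^ 2 * a / ε ^ 2 * partialFst f (u, v) -
        (2 * log r * (l * partialSnd f (l, v)) - log r ^ 2 * a / ε ^ 2 * partialFst f (l, v)) -
        (3 / 4) * log r ^ 2 * ∫ x in l..u, f (x, v) := by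
  rw [← uIcc_of_le hlu] at hseg hint
  set flux := fun x => 2 * log r * (x * partialSnd f (x, v)) -
    log r ^ 2 * a / ε ^ 2 * partialFst f (x, v)
  have hf₁ : ContDiffOn ℝ 1 (partialFst f) U := hf.partialFst_of_isOpen hU (by norm_num)
  have hf₂ : ContDiffOn ℝ 1 (partialSnd f) U := hf.partialSnd_of_isOpen hU (by norm_num)
  have hline : ∀ {h : ℝ × ℝ → ℝ}, ContinuousOn h U → ContinuousOn (fun x => h (x, v)) (uIcc l u) :=
    fun hh => hh.comp (continuous_id.prodMk continuous_const).continuousOn hseg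
  have hdiff : ∀ {h : ℝ × ℝ → ℝ}, ContDiffOn ℝ 1 h U → ∀ x ∈ uIcc l u,
      HasDerivAt (fun s => h (s, v)) (partialFst h (x, v)) x := fun hh x hx =>
    hh.hasDerivAt_partialFst hU one_ne_zero (hseg x hx)
  set flux' := fun x => 2 * log r * (partialSnd f (x, v) + x * partialFst (partialSnd f) (x, v)) -
    log r ^ 2 * a / ε ^ 2 * partialFst (partialFst f) (x, v)
  have hflux : ∀ x ∈ uIcc l u, HasDerivAt flux (flux' x) x := fun x hx =>
    ((((hasDerivAt_id' x).mul (hdiff hf₂ x hx)).const_mul (2 * log r)).sub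
      ((hdiff hf₁ x hx).const_mul (log r ^ 2 * a / ε ^ 2))).congr_deriv (by simp only [flux']; ring)
  have hcont₂₁ := hline (hf₂.partialFst_of_isOpen (m := 0) hU (by norm_num)).continuousOn
  have hcont₁₁ := hline (hf₁.partialFst_of_isOpen (m := 0) hU (by norm_num)).continuousOn
  have hflux'_int : IntervalIntegrable flux' volume l u :=
    ((continuousOn_const.mul ((hline hf₂.continuousOn).add (continuousOn_id.mul hcont₂₁))).sub
      (continuousOn_const.mul hcont₁₁)).intervalIntegrable
  have hpde : EqOn (fun x => 2 * log r * x * partialFst (partialSnd f) (x, v) +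
      partialSnd (partialSnd f) (x, v)) (fun x => flux' x - (3 / 4) * log r ^ 2 * f (x, v))
      (uIcc l u) := by
    intro x hx
    have hp := hseg x hx
    have h := hint x hx
    rw [deriv_deriv_fst_eq_partialFst_partialFst hf hU hp,
      deriv_deriv_snd_eq_partialSnd_partialSnd hf hU hp,
      (hf.hasDerivAt_partialSnd hU two_ne_zero hp).deriv,
      one_div, log_inv] at h
    field_simp at h
    simp only [flux']
    field_simp
    linear_combination h
  rw [intervalIntegral.integral_congr hpde, intervalIntegral.integral_sub hflux'_int
    ((hline hf.continuousOn).intervalIntegrable.const_mul _),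
    intervalIntegral.integral_eq_sub_of_hasDerivAt hflux hflux'_int,
    intervalIntegral.integral_const_mul]

theorem averaged_ode_horizontal_mean_general (r ε t σ : ℝ) (hr : r ∈ Set.Ioo (0:ℝ) 1)
    (hε : 0 < ε) (θ : ℝ → ℝ → ℝ) (U : Set (ℝ × ℝ)) (hU : IsOpen U)
    (hΩU : {p : ℝ × ℝ | p.2 ∈ Set.Icc (0:ℝ) 1 ∧
      p.1 ∈ Set.Icc (-(r ^ (2 * p.2)) / 2) (r ^ (2 * p.2) / 2)} ⊆ U)
    (hθ : ContDiffOn ℝ 2 (fun p : ℝ × ℝ => θ p.1 p.2) U)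
    (hint : ∀ v ∈ Set.Icc (0:ℝ) 1, ∀ x ∈ Set.Icc (-(r ^ (2 * v)) / 2) (r ^ (2 * v) / 2),
      r ^ (2 * v) * deriv (deriv fun s => θ s v) x +
        ε ^ 2 * ((3 / 4) * θ x v + 2 * deriv (fun w => θ x w) v / Real.log (1 / r) +
          deriv (deriv fun w => θ x w) v / (Real.log (1 / r)) ^ 2) = 0)
    (hbdryPlus : ∀ v ∈ Set.Icc (0:ℝ) 1,
      deriv (fun s => θ s v) (r ^ (2 * v) / 2) +
        ε ^ 2 * (θ (r ^ (2 * v) / 2) v / 2 +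
          deriv (fun w => θ (r ^ (2 * v) / 2) w) v / Real.log (1 / r)) =
      ε ^ 2 * Real.sqrt (1 + ε ^ 2 * r ^ (2 * v)) * (σ / t) * θ (r ^ (2 * v) / 2) v)
    (hbdryMinus : ∀ v ∈ Set.Icc (0:ℝ) 1,
      -deriv (fun s => θ s v) (-(r ^ (2 * v)) / 2) +
        ε ^ 2 * (θ (-(r ^ (2 * v)) / 2) v / 2 +
          deriv (fun w => θ (-(r ^ (2 * v)) / 2) w) v / Real.log (1 / r)) =
      ε ^ 2 * Real.sqrt (1 + ε ^ 2 * r ^ (2 * v)) * (σ / t) * θ (-(r ^ (2 * v)) / 2) v) :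
    ∀ v ∈ Set.Ioo (0:ℝ) 1,
      HasDerivAt
        (fun v : ℝ => r ^ (-(2 * v)) *
          ∫ x in (-(r ^ (2 * v)) / 2)..(r ^ (2 * v) / 2), deriv (fun w => θ x w) v)
        (-((Real.log r) ^ 2 *
          ((θ (r ^ (2 * v) / 2) v + θ (-(r ^ (2 * v)) / 2) v) *
              ((σ / t) * Real.sqrt (1 + ε ^ 2 * r ^ (2 * v)) - 1 / 2) +
            (3 / 4) * (r ^ (-(2 * v)) *
              ∫ x in (-(r ^ (2 * v)) / 2)..(r ^ (2 * v) / 2), θ x v)))) v := by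
  intro v hv
  have hv' : v ∈ Icc 0 1 := Ioo_subset_Icc_self hv
  have hlog : log r ≠ 0 := (log_neg hr.1 hr.2).ne
  have hc : 0 < r ^ (2 * v) := rpow_pos_of_pos hr.1 _
  have hle : -(r ^ (2 * v)) / 2 ≤ r ^ (2 * v) / 2 := by linarith
  refine (hasDerivAt_cuspMean_deriv_snd (f := fun p : ℝ × ℝ => θ p.1 p.2) hr.1 hU hΩU hθ
    hv).congr_deriv ?_
  rw [integral_eq_flux_sub_of_interior_eq hU hθ hlog hε.ne' hle (fun x hx => hΩU ⟨hv', hx⟩)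
    (hint v hv')]
  have hup : (r ^ (2 * v) / 2, v) ∈ U := hΩU ⟨hv', right_mem_Icc.2 hle⟩
  have hlo : (-(r ^ (2 * v)) / 2, v) ∈ U := hΩU ⟨hv', left_mem_Icc.2 hle⟩
  have hP := hbdryPlus v hv'
  have hM := hbdryMinus v hv'
  rw [(hθ.hasDerivAt_partialFst hU two_ne_zero hup).deriv,
    (hθ.hasDerivAt_partialSnd hU two_ne_zero hup).deriv, one_div, log_inv] at hP
  rw [(hθ.hasDerivAt_partialFst hU two_ne_zero hlo).deriv,
    (hθ.hasDerivAt_partialSnd hU two_ne_zero hlo).deriv, one_div, log_inv] at hM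
  rw [rpow_neg hr.1.le]
  linear_combination (norm := skip) -(log r ^ 2 / ε ^ 2) * (hP + hM)
  field_simp
  ring

/-- The averaged ODE for the horizontal mean of a Steklov eigenfunction on the cuspidal
domain in `(x,v)`-coordinates: if `θ` is `C²` on an open neighborhood of
`Ω̃ = {(x,v) : 0 ≤ v ≤ 1, −r^(2v)/2 ≤ x ≤ r^(2v)/2}`, satisfies the interior equation
`r^(2v) θ_xx + ε²((3/4)θ + 2θ_v/ln(1/r) + θ_vv/(ln(1/r))²) = 0` on `Ω̃` and the
Steklov-type lateral boundary conditions
`±θ_x(±r^(2v)/2, v) + ε²(θ/2 + θ_v/ln(1/r)) = ε²√(1+ε²r^(2v)) (σ/t) θ` at `x = ±r^(2v)/2`,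
then the horizontal mean `m(v) = r^(−2v) ∫ θ_v(x,v) dx` satisfies, for `v ∈ (0,1)`,
`−m'(v) = (ln r)² ((θ(r^(2v)/2,v) + θ(−r^(2v)/2,v))((σ/t)√(1+ε²r^(2v)) − 1/2) + (3/4) m̄(v))`,
where `m̄(v) = r^(−2v) ∫ θ(x,v) dx`. -/
theorem averaged_ode_horizontal_mean (r ε t σ : ℝ) (hr : r ∈ Set.Ioo (0:ℝ) 1)
    (hε : 0 < ε) (ht : 0 < t) (θ : ℝ → ℝ → ℝ) (U : Set (ℝ × ℝ)) (hU : IsOpen U)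
    (hΩU : {p : ℝ × ℝ | p.2 ∈ Set.Icc (0:ℝ) 1 ∧
      p.1 ∈ Set.Icc (-(r ^ (2 * p.2)) / 2) (r ^ (2 * p.2) / 2)} ⊆ U)
    (hθ : ContDiffOn ℝ 2 (fun p : ℝ × ℝ => θ p.1 p.2) U)
    (hint : ∀ v ∈ Set.Icc (0:ℝ) 1, ∀ x ∈ Set.Icc (-(r ^ (2 * v)) / 2) (r ^ (2 * v) / 2),
      r ^ (2 * v) * deriv (deriv fun s => θ s v) x +
        ε ^ 2 * ((3 / 4) * θ x v + 2 * deriv (fun w => θ x w) v / Real.log (1 / r) +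
          deriv (deriv fun w => θ x w) v / (Real.log (1 / r)) ^ 2) = 0)
    (hbdryPlus : ∀ v ∈ Set.Icc (0:ℝ) 1,
      deriv (fun s => θ s v) (r ^ (2 * v) / 2) +
        ε ^ 2 * (θ (r ^ (2 * v) / 2) v / 2 +
          deriv (fun w => θ (r ^ (2 * v) / 2) w) v / Real.log (1 / r)) =
      ε ^ 2 * Real.sqrt (1 + ε ^ 2 * r ^ (2 * v)) * (σ / t) * θ (r ^ (2 * v) / 2) v)
    (hbdryMinus : ∀ v ∈ Set.Icc (0:ℝ) 1,
      -deriv (fun s => θ s v) (-(r ^ (2 * v)) / 2) +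
        ε ^ 2 * (θ (-(r ^ (2 * v)) / 2) v / 2 +
          deriv (fun w => θ (-(r ^ (2 * v)) / 2) w) v / Real.log (1 / r)) =
      ε ^ 2 * Real.sqrt (1 + ε ^ 2 * r ^ (2 * v)) * (σ / t) * θ (-(r ^ (2 * v)) / 2) v) :
    ∀ v ∈ Set.Ioo (0:ℝ) 1,
      HasDerivAt
        (fun v : ℝ => r ^ (-(2 * v)) *
          ∫ x in (-(r ^ (2 * v)) / 2)..(r ^ (2 * v) / 2), deriv (fun w => θ x w) v)
        (-((Real.log r) ^ 2 *
          ((θ (r ^ (2 * v) / 2) v + θ (-(r ^ (2 * v)) / 2) v) *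
              ((σ / t) * Real.sqrt (1 + ε ^ 2 * r ^ (2 * v)) - 1 / 2) +
            (3 / 4) * (r ^ (-(2 * v)) *
              ∫ x in (-(r ^ (2 * v)) / 2)..(r ^ (2 * v) / 2), θ x v)))) v :=
  averaged_ode_horizontal_mean_general r ε t σ hr hε θ U hU hΩU hθ hint hbdryPlus hbdryMinus
end
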